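/- arXiv:2602.06649 — 5 statements merged into one kernel-verified Lean document; each statement's English description precedes it below -/
import Mathlib

section
/- For any λ > 0, the probability that no individuals survive a uniform catastrophe, namely (1/(λ+1)) · Σ_{j=0}^∞ (1/(j+1)) · (λ/(λ+1))^j, equals ln(λ+1)/λ. -/
open Real

theorem Real.hasSum_pow_div_succ {x : ℝ} (hx : |x| < 1) (hx₀ : x ≠ 0) :
    HasSum (fun n : ℕ => x ^ n / (n + 1)) (-log (1 - x) / x) := by
  refine ((hasSum_pow_div_log_of_abs_lt_one hx).div_const x).congr_fun fun n => ?_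
  rw [pow_succ, mul_div_right_comm, mul_div_cancel_right₀ _ hx₀]

/-- The probability that no individuals survive a uniform catastrophe equals
`ln(λ+1)/λ`. -/
theorem prob_no_survivors (l : ℝ) (hl : 0 < l) :
    (1/(l+1)) * ∑' j : ℕ, (1 / ((j:ℝ) + 1)) * (l/(l+1))^j = Real.log (l+1) / l := by
  have hl₁ : 0 < l + 1 := by linarith
  have hx : |l / (l + 1)| < 1 := by
    rw [abs_of_pos (by positivity), div_lt_one hl₁]
    linarith
  have h_one_sub : 1 - l / (l + 1) = (l + 1)⁻¹ := by field_simp; ring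
  simp_rw [one_div_mul_eq_div]
  rw [(hasSum_pow_div_succ hx (by positivity)).tsum_eq, h_one_sub, log_inv, neg_neg]
  field_simp
end

section
/- For 0 < x < 1, 0 ≤ s < 1, the double sum Σ_{n=1}^∞ (sx)^n ∫₀^∞ e^{-(n+1)t}/(1 - x e^{-t}) dt equals (s·ln(1-x) − ln(1-sx)) / ((s-1)x). -/
/-!
For fixed `t > 0` the series in `n` is geometric, with sum
`e^{-t} · q e^{-t} / ((1 - x e^{-t}) (1 - q e^{-t}))` where `q = s x`. Partial fractions split this
into multiples of `c e^{-t} / (1 - c e^{-t})` for `c = x` and `c = q`; that is the derivative of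
`log (1 - c e^{-t})`, so its integral over `(0, ∞)` is `-log (1 - c)`. Summing and integrating may
be interchanged because the `n`-th integrand is bounded by `q^(n+1) e^{-t} / (1 - x)`.
-/

open MeasureTheory Real Set Filter Topology

section
variable {c : ℝ}

lemma one_sub_mul_exp_neg_pos (hc : c < 1) {t : ℝ} (ht : 0 ≤ t) : 0 < 1 - c * exp (-t) := by
  have hexp : exp (-t) ≤ 1 := exp_le_one_iff.2 (by linarith)
  rcases le_or_gt c 0 with hc0 | hc0
  · nlinarith [exp_pos (-t)]
  · nlinarith

lemma hasDerivAt_log_one_sub_mul_exp_neg (hc : c < 1) {t : ℝ} (ht : 0 ≤ t) :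
    HasDerivAt (fun t => log (1 - c * exp (-t))) (c * exp (-t) / (1 - c * exp (-t))) t := by
  have h := (((hasDerivAt_neg t).exp.const_mul c).const_sub 1).log
    (one_sub_mul_exp_neg_pos hc ht).ne'
  convert h using 1
  ring

lemma tendsto_log_one_sub_mul_exp_neg_atTop :
    Tendsto (fun t => log (1 - c * exp (-t))) atTop (𝓝 0) := by
  have h := (tendsto_exp_neg_atTop_nhds_zero.const_mul c).const_sub 1
  rw [mul_zero, sub_zero] at h
  simpa only [log_one] using h.log one_ne_zero

lemma integrableOn_mul_exp_neg_div_one_sub_mul_exp_neg (hc0 : 0 ≤ c) (hc1 : c < 1) :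
    IntegrableOn (fun t => c * exp (-t) / (1 - c * exp (-t))) (Ioi 0) :=
  integrableOn_Ioi_deriv_of_nonneg' (fun _ ht => hasDerivAt_log_one_sub_mul_exp_neg hc1 ht)
    (fun t ht => div_nonneg (by positivity) (one_sub_mul_exp_neg_pos hc1 (le_of_lt ht)).le)
    tendsto_log_one_sub_mul_exp_neg_atTop

lemma integral_mul_exp_neg_div_one_sub_mul_exp_neg (hc0 : 0 ≤ c) (hc1 : c < 1) :
    ∫ t in Ioi 0, c * exp (-t) / (1 - c * exp (-t)) = -log (1 - c) := by
  rw [integral_Ioi_of_hasDerivAt_of_nonneg' (fun _ ht => hasDerivAt_log_one_sub_mul_exp_neg hc1 ht)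
    (fun t ht => div_nonneg (by positivity) (one_sub_mul_exp_neg_pos hc1 (le_of_lt ht)).le)
    tendsto_log_one_sub_mul_exp_neg_atTop]
  simp

variable {a : ℝ}

lemma norm_exp_neg_mul_div_one_sub_mul_exp_neg_le (hc0 : 0 ≤ c) (hc1 : c < 1) (ha : 1 ≤ a)
    {t : ℝ} (ht : 0 ≤ t) : ‖exp (-(a * t)) / (1 - c * exp (-t))‖ ≤ exp (-t) / (1 - c) := by
  have hden := one_sub_mul_exp_neg_pos hc1 ht
  have hexp : exp (-t) ≤ 1 := exp_le_one_iff.2 (by linarith)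
  rw [norm_of_nonneg (by positivity)]
  exact div_le_div₀ (exp_pos _).le (exp_le_exp.2 (by nlinarith)) (by linarith) (by nlinarith)

lemma integrableOn_exp_neg_mul_div_one_sub_mul_exp_neg (hc0 : 0 ≤ c) (hc1 : c < 1)
    (ha : 1 ≤ a) : IntegrableOn (fun t => exp (-(a * t)) / (1 - c * exp (-t))) (Ioi 0) := by
  refine Integrable.mono' ((integrableOn_exp_neg_Ioi 0).div_const (1 - c)) ?_ ?_
  · refine ContinuousOn.aestronglyMeasurable ?_ measurableSet_Ioi
    exact ContinuousOn.div (by fun_prop) (by fun_prop)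
      fun t ht => (one_sub_mul_exp_neg_pos hc1 (le_of_lt ht)).ne'
  · filter_upwards [ae_restrict_mem measurableSet_Ioi] with t ht
    exact norm_exp_neg_mul_div_one_sub_mul_exp_neg_le hc0 hc1 ha (le_of_lt ht)

lemma integral_norm_exp_neg_mul_div_one_sub_mul_exp_neg_le (hc0 : 0 ≤ c) (hc1 : c < 1)
    (ha : 1 ≤ a) : ∫ t in Ioi 0, ‖exp (-(a * t)) / (1 - c * exp (-t))‖ ≤ 1 / (1 - c) := by
  calc ∫ t in Ioi 0, ‖exp (-(a * t)) / (1 - c * exp (-t))‖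
      ≤ ∫ t in Ioi 0, exp (-t) / (1 - c) := by
        refine integral_mono_of_nonneg (ae_of_all _ fun _ => norm_nonneg _)
          ((integrableOn_exp_neg_Ioi 0).div_const _) ?_
        filter_upwards [ae_restrict_mem measurableSet_Ioi] with t ht
        exact norm_exp_neg_mul_div_one_sub_mul_exp_neg_le hc0 hc1 ha (le_of_lt ht)
    _ = 1 / (1 - c) := by rw [integral_div, integral_exp_neg_Ioi_zero]

end

lemma tsum_pow_succ_mul_pow_div_eq {q x u : ℝ} (hx : x ≠ 0) (hqx : q ≠ x) (hqu : |q * u| < 1)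
    (hxu : 1 - x * u ≠ 0) :
    ∑' n : ℕ, q ^ (n + 1) * (u ^ (n + 2) / (1 - x * u))
      = q / (x * (x - q)) * (x * u / (1 - x * u)) - 1 / (x - q) * (q * u / (1 - q * u)) := by
  have hqu' : 1 - q * u ≠ 0 := by linarith [(abs_lt.1 hqu).2]
  have hterm : ∀ n : ℕ, q ^ (n + 1) * (u ^ (n + 2) / (1 - x * u))
      = q * u ^ 2 / (1 - x * u) * (q * u) ^ n := fun n => by ring
  rw [tsum_congr hterm, tsum_mul_left, tsum_geometric_of_abs_lt_one hqu]
  have hxq : x - q ≠ 0 := sub_ne_zero.2 hqx.symm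
  have hux : 1 - u * x ≠ 0 := by rwa [mul_comm]
  field_simp
  ring

lemma tsum_pow_succ_mul_exp_neg_div_eq {q x t : ℝ} (hq0 : 0 ≤ q) (hq1 : q < 1) (hx0 : x ≠ 0)
    (hx1 : x < 1) (hqx : q ≠ x) (ht : 0 ≤ t) :
    ∑' n : ℕ, q ^ (n + 1) * (exp (-(((n : ℝ) + 2) * t)) / (1 - x * exp (-t)))
      = q / (x * (x - q)) * (x * exp (-t) / (1 - x * exp (-t)))
        - 1 / (x - q) * (q * exp (-t) / (1 - q * exp (-t))) := by
  have hexp (n : ℕ) : exp (-(((n : ℝ) + 2) * t)) = exp (-t) ^ (n + 2) := by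
    rw [← exp_nat_mul]; push_cast; ring_nf
  simp_rw [hexp]
  refine tsum_pow_succ_mul_pow_div_eq hx0 hqx ?_ (one_sub_mul_exp_neg_pos hx1 ht).ne'
  rw [abs_of_nonneg (by positivity)]
  linarith [one_sub_mul_exp_neg_pos hq1 ht]

lemma summable_integral_norm_pow_succ_mul_exp_neg_div {q c : ℝ} (hq0 : 0 ≤ q) (hq1 : q < 1)
    (hc0 : 0 ≤ c) (hc1 : c < 1) :
    Summable fun n : ℕ => ∫ t in Ioi 0,
      ‖q ^ (n + 1) * (exp (-(((n : ℝ) + 2) * t)) / (1 - c * exp (-t)))‖ := by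
  refine Summable.of_nonneg_of_le (fun n => integral_nonneg fun _ => norm_nonneg _) (fun n => ?_)
    ((summable_geometric_of_lt_one hq0 hq1).mul_left (q / (1 - c)))
  simp_rw [norm_mul, norm_pow, norm_of_nonneg hq0, integral_const_mul]
  calc q ^ (n + 1) * ∫ t in Ioi 0, ‖exp (-(((n : ℝ) + 2) * t)) / (1 - c * exp (-t))‖
      ≤ q ^ (n + 1) * (1 / (1 - c)) := by
        gcongr
        exact integral_norm_exp_neg_mul_div_one_sub_mul_exp_neg_le hc0 hc1
          (by linarith [n.cast_nonneg (α := ℝ)])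
    _ = q / (1 - c) * q ^ n := by ring

/-- Series-integral identity used to compute the pgf of the survivor count:
`Σ_{n≥1} (sx)^n ∫₀^∞ e^{-(n+1)t}/(1-x e^{-t}) dt
  = (s ln(1-x) - ln(1-sx))/((s-1)x)`. -/
theorem lerch_series_identity (x s : ℝ) (hx0 : 0 < x) (hx1 : x < 1)
    (hs0 : 0 ≤ s) (hs1 : s < 1) :
    (∑' n : ℕ, (s*x)^(n+1) *
        ∫ t in Set.Ioi (0:ℝ), Real.exp (-(((n:ℝ)+2)*t)) / (1 - x * Real.exp (-t)))
      = (s * Real.log (1-x) - Real.log (1 - s*x)) / ((s-1)*x) := by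
  set q := s * x
  have hq0 : 0 ≤ q := by positivity
  have hq1 : q < 1 := by nlinarith
  have hqx : q ≠ x := by nlinarith
  have hterm_int (n : ℕ) := integrableOn_exp_neg_mul_div_one_sub_mul_exp_neg hx0.le hx1
    (show (1 : ℝ) ≤ n + 2 by linarith [n.cast_nonneg (α := ℝ)])
  calc _ = ∑' n : ℕ, ∫ t in Ioi 0,
          q ^ (n + 1) * (exp (-(((n : ℝ) + 2) * t)) / (1 - x * exp (-t))) := by
        simp_rw [integral_const_mul]
    _ = ∫ t in Ioi 0, ∑' n : ℕ,
          q ^ (n + 1) * (exp (-(((n : ℝ) + 2) * t)) / (1 - x * exp (-t))) :=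
        integral_tsum_of_summable_integral_norm (fun n => (hterm_int n).const_mul _)
          (summable_integral_norm_pow_succ_mul_exp_neg_div hq0 hq1 hx0.le hx1)
    _ = q / (x * (x - q)) * -log (1 - x) - 1 / (x - q) * -log (1 - q) := by
        rw [setIntegral_congr_fun measurableSet_Ioi fun t ht =>
            tsum_pow_succ_mul_exp_neg_div_eq hq0 hq1 hx0.ne' hx1 hqx (le_of_lt ht),
          integral_sub, integral_const_mul, integral_const_mul,
          integral_mul_exp_neg_div_one_sub_mul_exp_neg hx0.le hx1,
          integral_mul_exp_neg_div_one_sub_mul_exp_neg hq0 hq1]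
        · exact (integrableOn_mul_exp_neg_div_one_sub_mul_exp_neg hx0.le hx1).const_mul _
        · exact (integrableOn_mul_exp_neg_div_one_sub_mul_exp_neg hq0 hq1).const_mul _
    _ = _ := by
        have hs : s - 1 ≠ 0 := by linarith
        field_simp
        ring
end

section
/- Let N be the number of survivors of a uniform catastrophe, with P(N=n) = (1/(λ+1))(λ/(λ+1))^n Σ_{j=0}^∞ (λ/(λ+1))^j/(j+n+1) for λ > 0. Then for all s with 0 ≤ s < 1, E[s^N] = ln(1 + λ(1-s)) / (λ(1-s)). -/
open Real Finset

/-! With `r = λ/(λ+1)`, the series `∑ sⁿ P(n)` is `(λ+1)⁻¹ ∑_{n,j} (sr)ⁿ rʲ/(n+j+1)`.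
Summed along the antidiagonals `n + j = m`, each block is the geometric sum
`((sr)^(m+1) - r^(m+1)) / ((sr - r)(m+1))`, so the double series is a difference of two
logarithmic series `∑ x^(m+1)/(m+1) = -log(1-x)`. -/

theorem Summable.hasSum_of_hasSum_sum_antidiagonal {α A : Type*} [AddCommMonoid α]
    [TopologicalSpace α] [ContinuousAdd α] [T3Space α] [AddMonoid A] [HasAntidiagonal A]
    {f : A × A → α} {a : α} (hf : Summable f)
    (h : HasSum (fun n ↦ ∑ p ∈ antidiagonal n, f p) a) : HasSum f a := by
  have hsigma := HasAntidiagonal.sigmaAntidiagonalEquivProd.hasSum_iff.2 hf.hasSum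
  have hfiber := hsigma.sigma fun n ↦ (antidiagonal n).hasSum fun p ↦ f p
  exact h.unique hfiber ▸ hf.hasSum

theorem sum_antidiagonal_pow_mul_pow {K : Type*} [Field K] {x y : K} (hxy : x ≠ y) (m : ℕ) :
    ∑ p ∈ antidiagonal m, x ^ p.1 * y ^ p.2 = (x ^ (m + 1) - y ^ (m + 1)) / (x - y) := by
  rw [Nat.sum_antidiagonal_eq_sum_range_succ_mk, ← (Commute.all x y).geom_sum₂ hxy]
  simp

theorem summable_pow_mul_pow_div_add_add_one {x y : ℝ} (hx : |x| < 1) (hy : |y| < 1) :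
    Summable fun p : ℕ × ℕ ↦ x ^ p.1 * y ^ p.2 / (p.1 + p.2 + 1) := by
  have hgeom : Summable fun p : ℕ × ℕ ↦ x ^ p.1 * y ^ p.2 :=
    summable_mul_of_summable_norm (by simpa using summable_geometric_of_lt_one (abs_nonneg x) hx)
      (by simpa using summable_geometric_of_lt_one (abs_nonneg y) hy)
  refine Summable.of_norm_bounded hgeom.norm fun p ↦ ?_
  rw [norm_div]
  refine div_le_self (norm_nonneg _) ?_
  rw [Real.norm_of_nonneg (by positivity)]
  linarith [(p.1.cast_nonneg : (0 : ℝ) ≤ p.1), (p.2.cast_nonneg : (0 : ℝ) ≤ p.2)]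

theorem hasSum_pow_mul_pow_div_add_add_one {x y : ℝ} (hx : |x| < 1) (hy : |y| < 1)
    (hxy : x ≠ y) :
    HasSum (fun p : ℕ × ℕ ↦ x ^ p.1 * y ^ p.2 / (p.1 + p.2 + 1))
      ((log (1 - y) - log (1 - x)) / (x - y)) := by
  refine (summable_pow_mul_pow_div_add_add_one hx hy).hasSum_of_hasSum_sum_antidiagonal ?_
  have hdiag (m : ℕ) : ∑ p ∈ antidiagonal m, x ^ p.1 * y ^ p.2 / (p.1 + p.2 + 1 : ℝ) =
      (x ^ (m + 1) / (m + 1) - y ^ (m + 1) / (m + 1)) / (x - y) := by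
    have hden : ∀ p ∈ antidiagonal m, x ^ p.1 * y ^ p.2 / (p.1 + p.2 + 1 : ℝ) =
        x ^ p.1 * y ^ p.2 / (m + 1) := fun p hp ↦ by
      rw [← mem_antidiagonal.1 hp, Nat.cast_add]
    rw [sum_congr rfl hden, ← sum_div, sum_antidiagonal_pow_mul_pow hxy]
    ring
  have hlog := ((hasSum_pow_div_log_of_abs_lt_one hx).sub
    (hasSum_pow_div_log_of_abs_lt_one hy)).div_const (x - y)
  simpa only [hdiag, neg_sub_neg] using hlog

/-- The probability generating function of the number `N` of survivors of a
uniform catastrophe: `E[s^N] = ln(1+λ(1-s))/(λ(1-s))`. -/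
theorem pgf_survivors (l : ℝ) (hl : 0 < l)
    (P : ℕ → ℝ)
    (hP : ∀ n : ℕ, P n = (1/(l+1)) * (l/(l+1))^n *
        ∑' j : ℕ, (l/(l+1))^j / ((j:ℝ) + n + 1)) :
    ∀ s : ℝ, 0 ≤ s → s < 1 →
      ∑' n : ℕ, s^n * P n = Real.log (1 + l*(1-s)) / (l*(1-s)) := by
  intro s hs0 hs1
  have hr0 : 0 < l / (l + 1) := by positivity
  have hr1 : l / (l + 1) < 1 := (div_lt_one (by positivity)).2 (lt_add_one l)
  have hsr : s * (l / (l + 1)) < l / (l + 1) := mul_lt_of_lt_one_left hr0 hs1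
  have hF := hasSum_pow_mul_pow_div_add_add_one
    (by rw [abs_of_nonneg (by positivity)]; linarith) (by rwa [abs_of_pos hr0]) hsr.ne
  have hrows := (hF.prod_fiberwise fun n ↦ (hF.summable.prod_factor n).hasSum).mul_left
    (1 / (l + 1))
  have hterm (n : ℕ) : s ^ n * P n = 1 / (l + 1) *
      ∑' j : ℕ, (s * (l / (l + 1))) ^ n * (l / (l + 1)) ^ j / (n + j + 1) := by
    have hj (j : ℕ) : (s * (l / (l + 1))) ^ n * (l / (l + 1)) ^ j / (n + j + 1) =
        (s * (l / (l + 1))) ^ n * ((l / (l + 1)) ^ j / (j + n + 1)) := by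
      rw [mul_div_assoc, add_comm (n : ℝ)]
    rw [hP, tsum_congr hj, tsum_mul_left]
    ring
  have hl1 : l + 1 ≠ 0 := by positivity
  have hlog_arg : 1 + l * (1 - s) ≠ 0 := by nlinarith
  have hone_sub_r : 1 - l / (l + 1) = 1 / (l + 1) := by field_simp; ring
  have hone_sub_sr : 1 - s * (l / (l + 1)) = (1 + l * (1 - s)) / (l + 1) := by field_simp; ring
  have hsr_sub_r : s * (l / (l + 1)) - l / (l + 1) = -(l * (1 - s) / (l + 1)) := by ring
  rw [tsum_congr hterm, hrows.tsum_eq, hone_sub_r, hone_sub_sr, hsr_sub_r,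
    log_div one_ne_zero hl1, log_div hlog_arg hl1, log_one]
  field_simp
  ring
end

section
/- The critical values λ_d defined as the unique positive root of λ = (d²/(d−1))·ln((λ+d)/d) form a sequence converging to 2 as d → ∞. -/
open Real Filter

/-!
Put `D = d` and `x = λ / D`. The defining equation says `log (1 + x) = u` with
`u = (D - 1) λ / D²`. The Padé bound `2x / (x + 2) ≤ log (1 + x)` gives `2 ≤ λ`, and
`1 + u + u² / 2 ≤ exp u = 1 + x` gives `λ ≤ 2 / (1 - 1/D)²`; both bounds tend to `2`.
-/

lemma log_one_add_div_eq_of_critical {D l : ℝ} (hD : 1 < D)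
    (h : l = D ^ 2 / (D - 1) * log ((l + D) / D)) :
    log (1 + l / D) = (D - 1) / D ^ 2 * l := by
  rw [one_add_div (by positivity), add_comm D]
  nth_rewrite 2 [h]
  field_simp [sub_ne_zero.2 hD.ne']

lemma two_le_of_critical {D l : ℝ} (hD : 1 < D) (hl : 0 < l)
    (h : l = D ^ 2 / (D - 1) * log ((l + D) / D)) : 2 ≤ l := by
  have hD0 : 0 < D := by linarith
  have hlog := le_log_one_add_of_nonneg (div_nonneg hl.le hD0.le)
  rw [log_one_add_div_eq_of_critical hD h, div_le_iff₀ (by positivity)] at hlog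
  field_simp at hlog
  nlinarith

lemma le_two_div_one_sub_inv_sq_of_critical {D l : ℝ} (hD : 1 < D) (hl : 0 ≤ l)
    (h : l = D ^ 2 / (D - 1) * log ((l + D) / D)) : l ≤ 2 / (1 - D⁻¹) ^ 2 := by
  have hD0 : 0 < D := by linarith
  have hD1 : 0 < D - 1 := by linarith
  have hexp : 1 + (D - 1) / D ^ 2 * l + ((D - 1) / D ^ 2 * l) ^ 2 / 2 ≤ 1 + l / D :=
    calc _ ≤ exp ((D - 1) / D ^ 2 * l) := quadratic_le_exp_of_nonneg (by positivity)
      _ = 1 + l / D := by rw [← log_one_add_div_eq_of_critical hD h, exp_log (by positivity)]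
  rw [show 1 - D⁻¹ = (D - 1) / D by field_simp, div_pow, div_div_eq_mul_div,
    le_div_iff₀ (by positivity)]
  field_simp at hexp
  nlinarith

lemma tendsto_two_div_one_sub_inv_sq :
    Tendsto (fun d : ℕ => 2 / (1 - (d : ℝ)⁻¹) ^ 2) atTop (nhds 2) := by
  have h := ((tendsto_inv_atTop_zero.comp tendsto_natCast_atTop_atTop).const_sub (1 : ℝ)).pow 2
  simpa [div_eq_mul_inv] using (h.inv₀ (by norm_num)).const_mul 2

/-- The critical values `λ_d`, the unique positive roots of
`λ = (d²/(d-1)) ln((λ+d)/d)`, converge to `2` as `d → ∞`. -/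
theorem critical_parameter_limit (L : ℕ → ℝ)
    (hL : ∀ d : ℕ, 2 ≤ d → 0 < L d ∧
      L d = ((d:ℝ)^2/((d:ℝ)-1)) * Real.log ((L d + d)/d)) :
    Filter.Tendsto L atTop (nhds 2) := by
  have hcrit : ∀ᶠ d : ℕ in atTop, 1 < (d : ℝ) ∧ 0 < L d ∧
      L d = ((d:ℝ)^2/((d:ℝ)-1)) * Real.log ((L d + d)/d) := by
    filter_upwards [eventually_ge_atTop 2] with d hd
    exact ⟨by exact_mod_cast hd, hL d hd⟩
  refine tendsto_of_tendsto_of_tendsto_of_le_of_le' tendsto_const_nhds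
    tendsto_two_div_one_sub_inv_sq ?_ ?_
  · filter_upwards [hcrit] with d ⟨hd, hpos, heq⟩
    exact two_le_of_critical hd hpos heq
  · filter_upwards [hcrit] with d ⟨hd, hpos, heq⟩
    exact le_two_div_one_sub_inv_sq_of_critical hd hpos.le heq
end

section
/- For λ > 2, the equation ln(1 + λ(1−s)) = λ·s·(1−s) has a solution s ∈ [0,1), and the smallest nonnegative solution is strictly less than 1; for 0 < λ ≤ 2, s = 1 is the smallest solution in [0,1]. -/
/-!
With `x = l (1 - t)` the equation reads `log (1 + x) = t x`. For `l ≤ 2`, the bound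
`log (1 + x) > 2x / (x + 2)` at a root with `t < 1` forces `t l > 2`, which is impossible.
For `l > 2`, the difference of the two sides is `log (1 + l) > 0` at `t = 0`, and it is negative
just below `t = 1` because `log (1 + x) < x - x² / l` whenever `2 (1 + x) < l`
(compare `1 + x` with `exp` of the right-hand side). The least zero of this continuous function
on `[0, r]`, for such an `r < 1`, is then also the least nonnegative root, since it lies below
every root beyond `r`.
-/

open Real Set

lemma Real.log_one_add_lt_sub_sq_div {a x : ℝ} (hx : 0 < x) (h : 2 * (1 + x) < a) :
    log (1 + x) < x - x ^ 2 / a := by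
  have ha : 0 < a := by linarith
  set y := x - x ^ 2 / a
  have hxy : x ^ 2 / a * a = x ^ 2 := div_mul_cancel₀ _ ha.ne'
  have hy : 0 ≤ y := by nlinarith [div_nonneg (sq_nonneg x) ha.le]
  rw [log_lt_iff_lt_exp (by linarith)]
  refine lt_of_lt_of_le ?_ (quadratic_le_exp_of_nonneg hy)
  nlinarith [mul_pos hx hx, sq_nonneg (x ^ 2 / a), div_nonneg (sq_nonneg x) ha.le]

lemma exists_isLeast_zero_of_continuousOn_Icc {f : ℝ → ℝ} {a b : ℝ} (hab : a ≤ b)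
    (hf : ContinuousOn f (Icc a b)) (hb : f b ≤ 0) (ha : 0 ≤ f a) :
    ∃ c, IsLeast {t ∈ Icc a b | f t = 0} c := by
  obtain ⟨c, hc, hfc⟩ := intermediate_value_Icc' hab hf ⟨hb, ha⟩
  have hcompact : IsCompact {t ∈ Icc a b | f t = 0} :=
    isCompact_Icc.of_isClosed_subset
      (hf.preimage_isClosed_of_isClosed isClosed_Icc isClosed_singleton) inter_subset_left
  exact hcompact.exists_isLeast ⟨c, hc, hfc⟩

lemma exists_isLeast_extinction_root_mem_Ico {l : ℝ} (hl : 2 < l) :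
    ∃ s ∈ Ico (0 : ℝ) 1, IsLeast {t : ℝ | 0 ≤ t ∧ log (1 + l * (1 - t)) = l * t * (1 - t)} s := by
  set g : ℝ → ℝ := fun t ↦ log (1 + l * (1 - t)) - l * t * (1 - t)
  have hl0 : 0 < l := by linarith
  -- `g (1 - u) < 0` as soon as `2 (1 + l u) < l`.
  obtain ⟨u, hlu⟩ : ∃ u, l * u = (l - 2) / 4 := ⟨(l - 2) / (4 * l), by field_simp⟩
  have hu : 0 < u := pos_of_mul_pos_right (by linarith) hl0.le
  have hu4 : u < 1 / 4 := by nlinarith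
  have hcont : ContinuousOn g (Icc 0 (1 - u)) := by
    refine ContinuousOn.sub (ContinuousOn.log (by fun_prop) fun t ht ↦ ?_) (by fun_prop)
    nlinarith [ht.2]
  have hg0 : 0 ≤ g 0 := by
    simp only [g, sub_zero, mul_one, mul_zero]
    linarith [log_pos (by linarith : (1 : ℝ) < 1 + l)]
  have hgr : g (1 - u) ≤ 0 := by
    have key := log_one_add_lt_sub_sq_div (mul_pos hl0 hu) (by linarith : 2 * (1 + l * u) < l)
    have hsq : (l * u) ^ 2 / l = l * u * u := by field_simp
    simp only [g, sub_sub_cancel]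
    nlinarith
  obtain ⟨m, ⟨⟨hm0, hmr⟩, hgm⟩, hmin⟩ :=
    exists_isLeast_zero_of_continuousOn_Icc (by linarith) hcont hgr hg0
  refine ⟨m, ⟨hm0, by linarith⟩, ⟨hm0, sub_eq_zero.mp hgm⟩, fun t ⟨ht0, ht⟩ ↦ ?_⟩
  rcases le_or_gt t (1 - u) with htr | htr
  · exact hmin ⟨⟨ht0, htr⟩, sub_eq_zero.mpr ht⟩
  · linarith

lemma one_le_of_extinction_root_of_le_two {l t : ℝ} (hl : 0 < l) (hl2 : l ≤ 2)
    (h : log (1 + l * (1 - t)) = l * t * (1 - t)) : 1 ≤ t := by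
  by_contra! ht1
  set x := l * (1 - t)
  have hx : 0 < x := mul_pos hl (by linarith)
  have hlog : 2 * x / (x + 2) < t * x := by
    rw [show t * x = l * t * (1 - t) by ring, ← h]
    exact lt_log_one_add_of_pos hx
  rw [div_lt_iff₀ (by linarith)] at hlog
  have htl : 2 < t * (x + 2) := lt_of_mul_lt_mul_left (by linarith : x * 2 < x * (t * (x + 2)))
    hx.le
  have : 2 < t * l := lt_of_mul_lt_mul_left (by nlinarith : (1 - t) * 2 < (1 - t) * (t * l))
    (by linarith)
  nlinarith

/-- Extinction probability equation for `C_*(λ)`. For `λ > 2` the equation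
`ln(1+λ(1-s)) = λ s (1-s)` has a smallest nonnegative solution, which lies in
`[0,1)`; for `0 < λ ≤ 2`, `s = 1` is the smallest solution in `[0,1]`. -/
theorem extinction_probability_no_restriction (l : ℝ) (hl : 0 < l) :
    (2 < l → ∃ s : ℝ, s ∈ Set.Ico (0:ℝ) 1 ∧
      IsLeast {t : ℝ | 0 ≤ t ∧ Real.log (1 + l*(1-t)) = l*t*(1-t)} s) ∧
    (l ≤ 2 → IsLeast {t : ℝ | t ∈ Set.Icc (0:ℝ) 1 ∧
      Real.log (1 + l*(1-t)) = l*t*(1-t)} 1) :=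
  ⟨exists_isLeast_extinction_root_mem_Ico,
    fun hl2 ↦ ⟨⟨right_mem_Icc.mpr zero_le_one, by simp⟩,
      fun _ ⟨_, ht⟩ ↦ one_le_of_extinction_root_of_le_two hl hl2 ht⟩⟩
end
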